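/- Let ℓ ≥ 1 and let u be a finite mass solution of the coagulation-with-emission equations on [0,T] with small initial conditions, i.e. u_i(0) = 0 for every i > ℓ. Then u_i(t) = 0 for every i > ℓ and every t ∈ [0,T] (no spontaneous generation of large clusters). -/

import Mathlib

open Finset Filter Topology

noncomputable section

/-- Total reaction probability mass
`M(t) = ∑_{m,n ≥ 1, m+n ≥ ℓ+1} m n u_m(t) u_n(t)`. -/
def Mfun (ℓ : ℕ) (u : ℕ → ℝ → ℝ) (t : ℝ) : ℝ :=
  ∑' p : ℕ × ℕ,
    if 1 ≤ p.1 ∧ 1 ≤ p.2 ∧ ℓ + 1 ≤ p.1 + p.2 then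
      (p.1 : ℝ) * (p.2 : ℝ) * u p.1 t * u p.2 t
    else 0

/-- Right-hand side of the coagulation-with-emission equation for `u n`:
`(1/M)[∑_{i=1}^{n+ℓ−1} i(n+ℓ−i) u_i u_{n+ℓ−i} − 2 n u_n ∑_{i ≥ max(1, ℓ−n+1)} i u_i]`. -/
def coagRHS (ℓ : ℕ) (u : ℕ → ℝ → ℝ) (n : ℕ) (t : ℝ) : ℝ :=
  (1 / Mfun ℓ u t) *
    ((∑ i ∈ Finset.Icc 1 (n + ℓ - 1),
        (i : ℝ) * ((n + ℓ - i : ℕ) : ℝ) * u i t * u (n + ℓ - i) t)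
      - 2 * (n : ℝ) * u n t *
          (∑' i : ℕ, if max 1 (ℓ + 1 - n) ≤ i then (i : ℝ) * u i t else 0))

/-- `u` is a (C¹) solution of the coagulation-with-emission equations on `[0,T]`,
with `M > 0` on `[0,T]` and nonnegative initial data summing to `1`. -/
structure IsCoagSolution (ℓ : ℕ) (T : ℝ) (u : ℕ → ℝ → ℝ) : Prop where
  contDiff : ∀ n, 1 ≤ n → ContDiffOn ℝ 1 (u n) (Set.Icc 0 T)
  Msummable : ∀ t ∈ Set.Icc (0 : ℝ) T,
    Summable (fun p : ℕ × ℕ =>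
      if 1 ≤ p.1 ∧ 1 ≤ p.2 ∧ ℓ + 1 ≤ p.1 + p.2 then
        (p.1 : ℝ) * (p.2 : ℝ) * u p.1 t * u p.2 t
      else 0)
  Mpos : ∀ t ∈ Set.Icc (0 : ℝ) T, 0 < Mfun ℓ u t
  ode : ∀ n, 1 ≤ n → ∀ t ∈ Set.Icc (0 : ℝ) T,
    HasDerivWithinAt (u n) (coagRHS ℓ u n t) (Set.Icc 0 T) t
  init_nonneg : ∀ n, 1 ≤ n → 0 ≤ u n 0
  init_sum : HasSum (fun i : ℕ => if 1 ≤ i then u i 0 else 0) 1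

/-- A finite mass solution: a nonnegative solution whose first-moment series
`m₁(t) = ∑_{i ≥ 1} i u_i(t)` converges uniformly on `[0,T]`. -/
structure IsFiniteMassSolution (ℓ : ℕ) (T : ℝ) (u : ℕ → ℝ → ℝ)
    extends IsCoagSolution ℓ T u : Prop where
  nonneg : ∀ n, 1 ≤ n → ∀ t ∈ Set.Icc (0 : ℝ) T, 0 ≤ u n t
  m1_unif : TendstoUniformlyOn
    (fun N t => ∑ i ∈ Finset.range N, (i : ℝ) * u i t)
    (fun t => ∑' i : ℕ, (i : ℝ) * u i t) atTop (Set.Icc 0 T)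

/-!
For `n > ℓ` the loss term of `u_n` is `2 n u_n m₁ / M`, while every pair `(i, j)` feeding its
gain term has `i + j = n + ℓ > 2ℓ`, hence contains a cluster larger than `ℓ`. Summing the
equations over `ℓ < n ≤ N`, the gain is therefore at most `2 m₁ ∑_{ℓ < i < N + ℓ} i u_i / M`,
which the loss cancels except for the sizes `N < i < N + ℓ`. So `Φ_N = ∑_{ℓ < n ≤ N} u_n`
vanishes at `0` and grows at rate at most `2 m₁ (∑_{i > N} i u_i) / M`. On `[0, T]` the first
moment is bounded, `M` is bounded below (it is lower semicontinuous and positive) and the tails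
of `m₁` are uniformly small, so `Φ_N → 0` uniformly as `N → ∞`.
-/

theorem lowerSemicontinuousOn_tsum_of_nonneg {ι α : Type*} [TopologicalSpace α]
    {f : ι → α → ℝ} {s : Set α} (hf : ∀ i, ContinuousOn (f i) s)
    (hf₀ : ∀ i, ∀ x ∈ s, 0 ≤ f i x) (hsum : ∀ x ∈ s, Summable fun i => f i x) :
    LowerSemicontinuousOn (fun x => ∑' i, f i x) s := by
  intro x hx y hy
  obtain ⟨S, hS⟩ := ((hsum x hx).hasSum.eventually (lt_mem_nhds hy)).exists
  have hcont := continuousOn_finsetSum S (fun i _ => hf i) x hx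
  filter_upwards [hcont.eventually (lt_mem_nhds hS), self_mem_nhdsWithin] with x' hlt hx'
  exact hlt.trans_le ((hsum x' hx').sum_le_tsum S fun i _ => hf₀ i x' hx')

theorem image_le_add_mul_sub_of_hasDerivWithinAt_le {f f' : ℝ → ℝ} {a b C : ℝ}
    (hf : ∀ x ∈ Set.Icc a b, HasDerivWithinAt f (f' x) (Set.Icc a b) x)
    (hf' : ∀ x ∈ Set.Icc a b, f' x ≤ C) {t : ℝ} (ht : t ∈ Set.Icc a b) :
    f t ≤ f a + C * (t - a) := by
  have hg : ∀ x ∈ Set.Icc a b,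
      HasDerivWithinAt (fun x => f x - C * x) (f' x - C) (Set.Icc a b) x := fun x hx => by
    simpa using (hf x hx).fun_sub ((hasDerivWithinAt_id x _).const_mul C)
  have hanti : AntitoneOn (fun x => f x - C * x) (Set.Icc a b) := by
    refine antitoneOn_of_hasDerivWithinAt_nonpos (f' := fun x => f' x - C) (convex_Icc a b)
      (fun x hx => (hg x hx).continuousWithinAt) (fun x hx => ?_) (fun x hx => ?_)
    · exact (hg x (interior_subset hx)).mono interior_subset
    · exact sub_nonpos.2 (hf' x (interior_subset hx))
  have := hanti ⟨le_rfl, ht.1.trans ht.2⟩ ht ht.1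
  linarith

theorem sum_le_tsum_sub_sum {ι : Type*} {a : ι → ℝ} (ha : ∀ i, 0 ≤ a i) (hs : Summable a)
    {s t : Finset ι} (hst : Disjoint s t) : ∑ i ∈ s, a i ≤ ∑' i, a i - ∑ i ∈ t, a i := by
  classical
  have := hs.sum_le_tsum (s ∪ t) fun i _ => ha i
  rw [sum_union hst] at this
  linarith

/-- The pairs `(i, j)` of cluster sizes that coagulate, emitting `ℓ`, into a cluster of size
`i + j - ℓ ∈ (ℓ, N]`. -/
def gainPairs (ℓ N : ℕ) : Finset (ℕ × ℕ) :=
  (Icc 1 (N + ℓ) ×ˢ Icc 1 (N + ℓ)).filter fun p => 2 * ℓ < p.1 + p.2 ∧ p.1 + p.2 ≤ N + ℓ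

section GainPairs

variable {ℓ N : ℕ}

theorem mem_gainPairs {p : ℕ × ℕ} :
    p ∈ gainPairs ℓ N ↔ 1 ≤ p.1 ∧ 1 ≤ p.2 ∧ 2 * ℓ < p.1 + p.2 ∧ p.1 + p.2 ≤ N + ℓ := by
  simp only [gainPairs, mem_filter, mem_product, mem_Icc]
  omega

theorem swap_mem_gainPairs {p : ℕ × ℕ} (hp : p ∈ gainPairs ℓ N) : p.swap ∈ gainPairs ℓ N := by
  rw [mem_gainPairs] at hp ⊢
  simp only [Prod.fst_swap, Prod.snd_swap]
  omega

theorem sum_gainPairs_swap (f : ℕ → ℕ → ℝ) :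
    ∑ p ∈ gainPairs ℓ N, f p.2 p.1 = ∑ p ∈ gainPairs ℓ N, f p.1 p.2 :=
  sum_nbij' Prod.swap Prod.swap (fun _ => swap_mem_gainPairs) (fun _ => swap_mem_gainPairs)
    (fun _ _ => rfl) (fun _ _ => rfl) (fun _ _ => rfl)

theorem sum_Ioc_sum_Icc_eq_sum_gainPairs (f : ℕ → ℕ → ℝ) :
    ∑ n ∈ Ioc ℓ N, ∑ i ∈ Icc 1 (n + ℓ - 1), f i (n + ℓ - i) = ∑ p ∈ gainPairs ℓ N, f p.1 p.2 := by
  rw [sum_sigma']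
  refine sum_nbij' (fun x => (x.2, x.1 + ℓ - x.2)) (fun p => ⟨p.1 + p.2 - ℓ, p.1⟩) ?_ ?_ ?_ ?_ ?_
  · rintro ⟨n, i⟩ h
    simp only [mem_sigma, mem_Ioc, mem_Icc, mem_gainPairs] at h ⊢
    omega
  · rintro ⟨i, j⟩ h
    simp only [mem_sigma, mem_Ioc, mem_Icc, mem_gainPairs] at h ⊢
    omega
  · rintro ⟨n, i⟩ h
    simp only [mem_sigma, mem_Ioc, mem_Icc] at h
    simp only [Sigma.mk.injEq, heq_eq_eq, and_true]
    omega
  · rintro ⟨i, j⟩ h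
    simp only [mem_gainPairs] at h
    simp only [Prod.mk.injEq, true_and]
    omega
  · intro x _
    rfl

theorem sum_gainPairs_le {a : ℕ → ℝ} (ha : ∀ i, 0 ≤ a i) (hs : Summable a) :
    ∑ p ∈ gainPairs ℓ N, a p.1 * a p.2 ≤ 2 * (∑ i ∈ Ioo ℓ (N + ℓ), a i) * ∑' i, a i := by
  have hsplit : ∀ p ∈ gainPairs ℓ N, a p.1 * a p.2 ≤
      (if ℓ < p.1 then a p.1 * a p.2 else 0) + (if ℓ < p.2 then a p.2 * a p.1 else 0) := by
    intro p hp
    rw [mem_gainPairs] at hp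
    have := mul_nonneg (ha p.1) (ha p.2)
    split_ifs <;> first | omega | linarith [mul_comm (a p.1) (a p.2)]
  have hsub : (gainPairs ℓ N).filter (fun p => ℓ < p.1) ⊆ Ioo ℓ (N + ℓ) ×ˢ range (N + ℓ) := by
    intro p hp
    simp only [mem_filter, mem_gainPairs, mem_product, mem_Ioo, mem_range] at hp ⊢
    omega
  calc ∑ p ∈ gainPairs ℓ N, a p.1 * a p.2
      ≤ ∑ p ∈ gainPairs ℓ N,
          ((if ℓ < p.1 then a p.1 * a p.2 else 0) + (if ℓ < p.2 then a p.2 * a p.1 else 0)) :=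
        sum_le_sum hsplit
    _ = 2 * ∑ p ∈ (gainPairs ℓ N).filter (fun p => ℓ < p.1), a p.1 * a p.2 := by
        rw [sum_add_distrib, sum_gainPairs_swap fun i j => if ℓ < i then a i * a j else 0,
          sum_filter]
        ring
    _ ≤ 2 * ∑ p ∈ Ioo ℓ (N + ℓ) ×ˢ range (N + ℓ), a p.1 * a p.2 := by
        gcongr
        exact fun p _ _ => mul_nonneg (ha p.1) (ha p.2)
    _ = 2 * (∑ i ∈ Ioo ℓ (N + ℓ), a i) * ∑ j ∈ range (N + ℓ), a j := by
        rw [sum_product, mul_assoc, sum_mul_sum]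
    _ ≤ 2 * (∑ i ∈ Ioo ℓ (N + ℓ), a i) * ∑' i, a i :=
        mul_le_mul_of_nonneg_left (hs.sum_le_tsum _ fun i _ => ha i)
          (mul_nonneg two_pos.le (sum_nonneg fun i _ => ha i))

end GainPairs

theorem sum_gain_sub_loss_le {a : ℕ → ℝ} (ha : ∀ i, 0 ≤ a i) (hs : Summable a) (ℓ N : ℕ) :
    ∑ n ∈ Ioc ℓ N, (∑ i ∈ Icc 1 (n + ℓ - 1), a i * a (n + ℓ - i) - 2 * a n * ∑' i, a i)
      ≤ 2 * (∑' i, a i) * ∑ i ∈ Ioo N (N + ℓ), a i := by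
  have hgain := sum_gainPairs_le (ℓ := ℓ) (N := N) ha hs
  have hsplit : ∑ i ∈ Ioo ℓ (N + ℓ), a i ≤ ∑ i ∈ Ioc ℓ N, a i + ∑ i ∈ Ioo N (N + ℓ), a i := by
    have hdisj : Disjoint (Ioc ℓ N) (Ioo N (N + ℓ)) :=
      disjoint_left.2 fun i hi hi' => by simp only [mem_Ioc, mem_Ioo] at hi hi'; omega
    rw [← sum_union hdisj]
    exact sum_le_sum_of_subset_of_nonneg
      (fun i hi => by simp only [mem_union, mem_Ioc, mem_Ioo] at hi ⊢; omega) fun i _ _ => ha i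
  have := mul_le_mul_of_nonneg_right hsplit (tsum_nonneg ha : 0 ≤ ∑' i, a i)
  rw [sum_sub_distrib, sum_Ioc_sum_Icc_eq_sum_gainPairs fun i j => a i * a j, ← sum_mul, ← mul_sum]
  linarith

theorem coagRHS_eq_of_lt {ℓ n : ℕ} (u : ℕ → ℝ → ℝ) (t : ℝ) (hn : ℓ < n) :
    coagRHS ℓ u n t =
      (∑ i ∈ Icc 1 (n + ℓ - 1), ((i : ℝ) * u i t) * (((n + ℓ - i : ℕ) : ℝ) * u (n + ℓ - i) t)
        - 2 * ((n : ℝ) * u n t) * ∑' i : ℕ, (i : ℝ) * u i t) / Mfun ℓ u t := by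
  have hloss : (∑' i : ℕ, if max 1 (ℓ + 1 - n) ≤ i then (i : ℝ) * u i t else 0)
      = ∑' i : ℕ, (i : ℝ) * u i t := by
    refine tsum_congr fun i => ?_
    rcases Nat.eq_zero_or_pos i with rfl | hi
    · simp
    · exact if_pos (by omega)
  rw [coagRHS, hloss, one_div_mul_eq_div]
  congr 2
  · exact sum_congr rfl fun i _ => by ring
  · ring

namespace IsFiniteMassSolution

variable {ℓ : ℕ} {T : ℝ} {u : ℕ → ℝ → ℝ}

theorem moment_nonneg (hu : IsFiniteMassSolution ℓ T u) {t : ℝ} (ht : t ∈ Set.Icc 0 T)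
    (i : ℕ) : 0 ≤ (i : ℝ) * u i t := by
  rcases Nat.eq_zero_or_pos i with rfl | hi
  · simp
  · exact mul_nonneg i.cast_nonneg (hu.nonneg i hi t ht)

theorem hasSum_moment (hu : IsFiniteMassSolution ℓ T u) {t : ℝ} (ht : t ∈ Set.Icc 0 T) :
    HasSum (fun i : ℕ => (i : ℝ) * u i t) (∑' i : ℕ, (i : ℝ) * u i t) :=
  (hasSum_iff_tendsto_nat_of_nonneg (hu.moment_nonneg ht) _).2 (hu.m1_unif.tendsto_at ht)

theorem continuousOn_moment (hu : IsFiniteMassSolution ℓ T u) :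
    ContinuousOn (fun t => ∑' i : ℕ, (i : ℝ) * u i t) (Set.Icc 0 T) := by
  have hterm (i : ℕ) : ContinuousOn (fun t => (i : ℝ) * u i t) (Set.Icc 0 T) := by
    rcases Nat.eq_zero_or_pos i with rfl | hi
    · simpa using continuousOn_const
    · exact continuousOn_const.mul (hu.contDiff i hi).continuousOn
  exact hu.m1_unif.continuousOn
    (Frequently.of_forall fun N => continuousOn_finsetSum _ fun i _ => hterm i)

theorem exists_moment_le (hu : IsFiniteMassSolution ℓ T u) :
    ∃ B, ∀ t ∈ Set.Icc 0 T, ∑' i : ℕ, (i : ℝ) * u i t ≤ B := by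
  obtain ⟨B, hB⟩ := isCompact_Icc.bddAbove_image hu.continuousOn_moment
  exact ⟨B, fun t ht => hB (Set.mem_image_of_mem _ ht)⟩

theorem lowerSemicontinuousOn_Mfun (hu : IsFiniteMassSolution ℓ T u) :
    LowerSemicontinuousOn (Mfun ℓ u) (Set.Icc 0 T) := by
  refine lowerSemicontinuousOn_tsum_of_nonneg (fun p => ?_) (fun p t ht => ?_) hu.Msummable
  · by_cases h : 1 ≤ p.1 ∧ 1 ≤ p.2 ∧ ℓ + 1 ≤ p.1 + p.2
    · simp only [h, and_self, if_true]
      exact (continuousOn_const.mul (hu.contDiff _ h.1).continuousOn).mul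
        (hu.contDiff _ h.2.1).continuousOn
    · simpa only [h, if_false] using continuousOn_const
  · split_ifs with h
    · exact mul_nonneg (mul_nonneg (by positivity) (hu.nonneg _ h.1 t ht)) (hu.nonneg _ h.2.1 t ht)
    · exact le_rfl

theorem exists_pos_le_Mfun (hu : IsFiniteMassSolution ℓ T u) (hT : 0 ≤ T) :
    ∃ δ > 0, ∀ t ∈ Set.Icc 0 T, δ ≤ Mfun ℓ u t := by
  obtain ⟨t₀, ht₀, hmin⟩ :=
    hu.lowerSemicontinuousOn_Mfun.exists_isMinOn (Set.nonempty_Icc.2 hT) isCompact_Icc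
  exact ⟨_, hu.Mpos t₀ ht₀, isMinOn_iff.1 hmin⟩

theorem eventually_moment_sub_sum_lt (hu : IsFiniteMassSolution ℓ T u) {η : ℝ} (hη : 0 < η) :
    ∀ᶠ N in atTop, ∀ t ∈ Set.Icc 0 T,
      ∑' i : ℕ, (i : ℝ) * u i t - ∑ i ∈ range N, (i : ℝ) * u i t < η :=
  (Metric.tendstoUniformlyOn_iff.1 hu.m1_unif η hη).mono fun _ hN t ht =>
    (le_abs_self _).trans_lt (by simpa only [Real.dist_eq] using hN t ht)

theorem sum_coagRHS_le (hu : IsFiniteMassSolution ℓ T u) (N : ℕ) {t : ℝ}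
    (ht : t ∈ Set.Icc 0 T) :
    ∑ n ∈ Ioc ℓ N, coagRHS ℓ u n t ≤
      2 * (∑' i : ℕ, (i : ℝ) * u i t) *
        (∑' i : ℕ, (i : ℝ) * u i t - ∑ i ∈ range N, (i : ℝ) * u i t) / Mfun ℓ u t := by
  rw [sum_congr rfl fun n hn => coagRHS_eq_of_lt u t (mem_Ioc.1 hn).1, ← sum_div]
  have ha := hu.moment_nonneg ht
  have hs := (hu.hasSum_moment ht).summable
  have htail := sum_le_tsum_sub_sum ha hs (s := Ioo N (N + ℓ)) (t := range N)
    (disjoint_left.2 fun i hi hi' => by simp only [mem_Ioo, mem_range] at hi hi'; omega)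
  refine div_le_div_of_nonneg_right ?_ (hu.Mpos t ht).le
  exact (sum_gain_sub_loss_le ha hs ℓ N).trans
    (mul_le_mul_of_nonneg_left htail (mul_nonneg two_pos.le (tsum_nonneg ha)))

theorem sum_Ioc_le (hu : IsFiniteMassSolution ℓ T u) (hsmall : ∀ i, ℓ < i → u i 0 = 0)
    {δ B η : ℝ} {N : ℕ} (hδ : 0 < δ) (hδM : ∀ t ∈ Set.Icc 0 T, δ ≤ Mfun ℓ u t)
    (hB : ∀ t ∈ Set.Icc 0 T, ∑' i : ℕ, (i : ℝ) * u i t ≤ B)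
    (hη : ∀ t ∈ Set.Icc 0 T, ∑' i : ℕ, (i : ℝ) * u i t - ∑ i ∈ range N, (i : ℝ) * u i t ≤ η)
    {t : ℝ} (ht : t ∈ Set.Icc 0 T) :
    ∑ n ∈ Ioc ℓ N, u n t ≤ 2 * B * η / δ * t := by
  have hderiv (s) (hs : s ∈ Set.Icc 0 T) : HasDerivWithinAt (fun s => ∑ n ∈ Ioc ℓ N, u n s)
      (∑ n ∈ Ioc ℓ N, coagRHS ℓ u n s) (Set.Icc 0 T) s :=
    HasDerivWithinAt.fun_sum fun n hn => hu.ode n (by simp only [mem_Ioc] at hn; omega) s hs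
  have hrate (s) (hs : s ∈ Set.Icc 0 T) : ∑ n ∈ Ioc ℓ N, coagRHS ℓ u n s ≤ 2 * B * η / δ := by
    have hm : 0 ≤ ∑' i : ℕ, (i : ℝ) * u i s := tsum_nonneg (hu.moment_nonneg hs)
    have htail : 0 ≤ ∑' i : ℕ, (i : ℝ) * u i s - ∑ i ∈ range N, (i : ℝ) * u i s :=
      sub_nonneg.2 ((hu.hasSum_moment hs).summable.sum_le_tsum _ fun i _ => hu.moment_nonneg hs i)
    have hB0 : 0 ≤ B := hm.trans (hB s hs)
    refine (hu.sum_coagRHS_le N hs).trans (div_le_div₀ (by nlinarith [hη s hs]) ?_ hδ (hδM s hs))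
    gcongr
    exacts [hB s hs, hη s hs]
  have h0 : ∑ n ∈ Ioc ℓ N, u n 0 = 0 :=
    sum_eq_zero fun n hn => hsmall n (mem_Ioc.1 hn).1
  simpa [h0] using image_le_add_mul_sub_of_hasDerivWithinAt_le hderiv hrate ht

end IsFiniteMassSolution

theorem no_spontaneous_generation_large (ℓ : ℕ) (T : ℝ)
    (u : ℕ → ℝ → ℝ) (hu : IsFiniteMassSolution ℓ T u)
    (hsmall : ∀ i, ℓ < i → u i 0 = 0) :
    ∀ i, ℓ < i → ∀ t ∈ Set.Icc (0 : ℝ) T, u i t = 0 := by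
  intro i hi t ht
  obtain ⟨δ, hδ, hδM⟩ := hu.exists_pos_le_Mfun (ht.1.trans ht.2)
  obtain ⟨B, hB⟩ := hu.exists_moment_le
  have hbound : ∀ η > 0, u i t ≤ 2 * B * η / δ * t := by
    intro η hη
    obtain ⟨N, hN, hiN⟩ := ((hu.eventually_moment_sub_sum_lt hη).and (eventually_ge_atTop i)).exists
    calc u i t ≤ ∑ n ∈ Ioc ℓ N, u n t :=
          single_le_sum (fun n hn => hu.nonneg n (by simp only [mem_Ioc] at hn; omega) t ht)
            (mem_Ioc.2 ⟨hi, hiN⟩)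
      _ ≤ 2 * B * η / δ * t := hu.sum_Ioc_le hsmall hδ hδM hB (fun s hs => (hN s hs).le) ht
  have hlim : Tendsto (fun η => 2 * B * η / δ * t) (𝓝[>] 0) (𝓝 0) :=
    ((by fun_prop : Continuous fun η : ℝ => 2 * B * η / δ * t).tendsto' 0 0 (by simp)).mono_left
      nhdsWithin_le_nhds
  exact le_antisymm (ge_of_tendsto hlim (eventually_nhdsWithin_of_forall hbound))
    (hu.nonneg i (by omega) t ht)

end
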